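/- If g ∈ L²(𝕋³) is a nonzero solution of u(0,q)g(q) = μ φ(q)∫_{𝕋³}φ(t)g(t)dt a.e. (with φ real-analytic, μ > 0), then φ(0) = 0. -/

import Mathlib

/-!
Since `u(0,·) ≠ 0` a.e., the equation forces `g = c φ / u(0,·)` with `c = μ ∫ φ g`, and `c ≠ 0`
because `g ≠ 0`. If `φ(0) ≠ 0`, then near `0` we have `|φ| ≥ |φ(0)|/2` and `u(0,q) ≤ 3‖q‖²`, so
`g² ≳ ‖q‖⁻⁴`, which is not integrable near the origin of a three-dimensional space.
-/

open Real MeasureTheory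

noncomputable def eps (p : Fin 3 → ℝ) : ℝ := 3 - Real.cos (p 0) - Real.cos (p 1) - Real.cos (p 2)

noncomputable def uu (p q : Fin 3 → ℝ) : ℝ := eps p + eps (p - q) + eps q

/-- The torus `𝕋³`, identified with the cube `(-π, π]³`. -/
def T3 : Set (Fin 3 → ℝ) := Set.univ.pi fun _ => Set.Ioc (-Real.pi) Real.pi

/-- `m(p) = min_{q ∈ 𝕋³} u(p,q)`, the bottom of the essential spectrum. -/
noncomputable def mfun (p : Fin 3 → ℝ) : ℝ := sInf (uu p '' T3)

/-- The Fredholm determinant `Δ_μ(p,z) = 1 - μ ∫_{𝕋³} φ(t)²/(u(p,t) - z) dt`. -/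
noncomputable def Δ (μ : ℝ) (φ : (Fin 3 → ℝ) → ℝ) (p : Fin 3 → ℝ) (z : ℝ) : ℝ :=
  1 - μ * ∫ t in T3, φ t ^ 2 / (uu p t - z)

open Metric Set Filter Topology

section NormRpow

variable {E : Type*} [NormedAddCommGroup E] [NormedSpace ℝ E] [FiniteDimensional ℝ E]
  [Nontrivial E] [MeasurableSpace E] [BorelSpace E] (μ : Measure E) [μ.IsAddHaarMeasure]

theorem not_integrableOn_ball_norm_rpow_neg {α r : ℝ} (hα : Module.finrank ℝ E ≤ α)
    (hr : 0 < r) : ¬ IntegrableOn (fun x : E => ‖x‖ ^ (-α)) (ball 0 r) μ := by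
  rw [integrableOn_fun_norm_addHaar μ (f := fun y => y ^ (-α))]
  intro h
  have hd : 1 ≤ Module.finrank ℝ E := Module.finrank_pos
  have h' : IntegrableOn (fun y : ℝ => y ^ ((Module.finrank ℝ E : ℝ) - 1 + -α)) (Ioo 0 r) := by
    refine h.congr_fun (fun y hy => ?_) measurableSet_Ioo
    rw [Real.rpow_add hy.1, Real.rpow_sub hy.1, Real.rpow_one, Real.rpow_natCast]
    simp only [smul_eq_mul, pow_sub₀ _ hy.1.ne' hd, pow_one, div_eq_mul_inv]
  rw [intervalIntegral.integrableOn_Ioo_rpow_iff hr] at h'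
  linarith

theorem not_integrableOn_ball_of_mul_norm_rpow_neg_le {f : E → ℝ} {C α r : ℝ} (hC : 0 < C)
    (hα : Module.finrank ℝ E ≤ α) (hr : 0 < r)
    (hf : ∀ᵐ x ∂μ.restrict (ball 0 r), C * ‖x‖ ^ (-α) ≤ f x) :
    ¬ IntegrableOn f (ball 0 r) μ := by
  intro hfi
  have hmeas : AEStronglyMeasurable (fun x : E => C * ‖x‖ ^ (-α)) (μ.restrict (ball 0 r)) :=
    ((continuous_norm.measurable.pow_const _).const_mul C).aestronglyMeasurable
  have hCi : IntegrableOn (fun x : E => C * ‖x‖ ^ (-α)) (ball 0 r) μ := by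
    refine hfi.mono' hmeas ?_
    filter_upwards [hf] with x hx
    rwa [Real.norm_of_nonneg (by positivity)]
  have := hCi.const_mul C⁻¹
  simp only [← mul_assoc, inv_mul_cancel₀ hC.ne', one_mul] at this
  exact not_integrableOn_ball_norm_rpow_neg μ hα hr this

end NormRpow

lemma uu_zero_left (q : Fin 3 → ℝ) : uu 0 q = 2 * eps q := by
  simp only [uu, eps, Pi.zero_apply, zero_sub, Pi.neg_apply, Real.cos_neg, Real.cos_zero]
  ring

lemma eps_nonneg (q : Fin 3 → ℝ) : 0 ≤ eps q := by
  have := Real.cos_le_one (q 0)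
  have := Real.cos_le_one (q 1)
  have := Real.cos_le_one (q 2)
  simp only [eps]
  linarith

lemma uu_zero_left_le (q : Fin 3 → ℝ) : uu 0 q ≤ 3 * ‖q‖ ^ 2 := by
  have hcos : ∀ i, 1 - Real.cos (q i) ≤ ‖q‖ ^ 2 / 2 := fun i => by
    have := Real.one_sub_sq_div_two_le_cos (x := q i)
    have : q i ^ 2 ≤ ‖q‖ ^ 2 := by
      simpa [sq_abs] using pow_le_pow_left₀ (norm_nonneg _) (norm_le_pi_norm q i) 2
    linarith
  have := hcos 0
  have := hcos 1
  have := hcos 2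
  rw [uu_zero_left, eps]
  linarith

lemma eq_zero_of_uu_zero_left_eq_zero {q : Fin 3 → ℝ} (hq : q ∈ T3) (h : uu 0 q = 0) : q = 0 := by
  have hcos : ∀ i, Real.cos (q i) = 1 := by
    have := Real.cos_le_one (q 0)
    have := Real.cos_le_one (q 1)
    have := Real.cos_le_one (q 2)
    rw [uu_zero_left, eps] at h
    intro i
    fin_cases i <;> simp <;> linarith
  funext i
  obtain ⟨hlo, hhi⟩ := hq i (mem_univ i)
  exact (Real.cos_eq_one_iff_of_lt_of_lt (by linarith [Real.pi_pos])
    (by linarith [Real.pi_gt_three])).1 (hcos i)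

lemma measurableSet_T3 : MeasurableSet T3 :=
  MeasurableSet.univ_pi fun _ => measurableSet_Ioc

lemma ae_uu_zero_left_ne_zero : ∀ᵐ q ∂volume.restrict T3, uu 0 q ≠ 0 := by
  rw [ae_restrict_iff' measurableSet_T3]
  filter_upwards [compl_mem_ae_iff.2 (measure_singleton (0 : Fin 3 → ℝ))] with q hq0 hqT hu
  exact hq0 (eq_zero_of_uu_zero_left_eq_zero hqT hu)

lemma T3_mem_nhds_zero : T3 ∈ 𝓝 (0 : Fin 3 → ℝ) :=
  set_pi_mem_nhds finite_univ fun _ _ =>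
    Ioc_mem_nhds (by simp [Real.pi_pos]) Real.pi_pos

lemma sq_le_nine_mul_norm_pow_four_mul_sq {q : Fin 3 → ℝ} {g a : ℝ} (h : uu 0 q * g = a) :
    a ^ 2 ≤ 9 * ‖q‖ ^ 4 * g ^ 2 := by
  have hu0 : 0 ≤ uu 0 q := by rw [uu_zero_left]; linarith [eps_nonneg q]
  have hu : uu 0 q ^ 2 ≤ (3 * ‖q‖ ^ 2) ^ 2 := pow_le_pow_left₀ hu0 (uu_zero_left_le q) 2
  calc a ^ 2 = uu 0 q ^ 2 * g ^ 2 := by rw [← h]; ring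
    _ ≤ (3 * ‖q‖ ^ 2) ^ 2 * g ^ 2 := by gcongr
    _ = 9 * ‖q‖ ^ 4 * g ^ 2 := by ring

lemma mul_norm_rpow_neg_four_le_sq {q : Fin 3 → ℝ} {g c a b : ℝ} (h : uu 0 q * g = c * a)
    (hab : |b| / 2 < |a|) : c ^ 2 * b ^ 2 / 36 * ‖q‖ ^ (-4 : ℝ) ≤ g ^ 2 := by
  rcases eq_or_ne q 0 with rfl | hq
  · simp [Real.zero_rpow (by norm_num : (-4 : ℝ) ≠ 0), sq_nonneg]
  have hn : 0 < ‖q‖ := norm_pos_iff.2 hq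
  have hba : b ^ 2 ≤ 4 * a ^ 2 := by
    nlinarith [sq_abs a, sq_abs b, abs_nonneg b]
  have hca := mul_le_mul_of_nonneg_left hba (sq_nonneg c)
  have hg := sq_le_nine_mul_norm_pow_four_mul_sq h
  rw [Real.rpow_neg hn.le, ← div_eq_mul_inv, Real.rpow_ofNat, div_le_iff₀ (by positivity)]
  rw [mul_pow] at hg
  linarith

theorem stmt13_general (φ : (Fin 3 → ℝ) → ℝ) (hφ : ∀ x, AnalyticAt ℝ φ x)
    (μ : ℝ) (g : (Fin 3 → ℝ) → ℝ)
    (hg2 : MemLp g 2 (volume.restrict T3))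
    (hgne : ¬ (∀ᵐ q ∂(volume.restrict T3), g q = 0))
    (heq : ∀ᵐ q ∂(volume.restrict T3),
      uu 0 q * g q = μ * φ q * ∫ t in T3, φ t * g t) :
    φ 0 = 0 := by
  by_contra hφ0
  set c := μ * ∫ t in T3, φ t * g t
  have hcφ : ∀ᵐ q ∂volume.restrict T3, uu 0 q * g q = c * φ q := by
    filter_upwards [heq] with q hq
    rw [hq]; ring
  have hc : c ≠ 0 := fun hc0 => hgne <| by
    filter_upwards [hcφ, ae_uu_zero_left_ne_zero] with q hq hu
    simpa [hc0, hu] using hq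
  obtain ⟨r, hr, hball⟩ : ∃ r > 0, ∀ q ∈ ball 0 r, q ∈ T3 ∧ |φ 0| / 2 < |φ q| :=
    eventually_nhds_iff_ball.1 <| Eventually.and T3_mem_nhds_zero <|
      (hφ 0).continuousAt.abs.eventually (lt_mem_nhds (by simpa using hφ0))
  have hsub : ball 0 r ⊆ T3 := fun q hq => (hball q hq).1
  have hbound : ∀ᵐ q ∂volume.restrict (ball 0 r),
      c ^ 2 * φ 0 ^ 2 / 36 * ‖q‖ ^ (-4 : ℝ) ≤ g q ^ 2 := by
    filter_upwards [ae_restrict_of_ae_restrict_of_subset hsub hcφ,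
      ae_restrict_mem measurableSet_ball] with q hq hqr
    exact mul_norm_rpow_neg_four_le_sq hq (hball q hqr).2
  refine not_integrableOn_ball_of_mul_norm_rpow_neg_le volume (by positivity)
    (by simp only [Module.finrank_fin_fun]; norm_num) hr hbound ?_
  have hg2i : IntegrableOn (fun q => g q ^ 2) T3 := hg2.integrable_sq
  exact hg2i.mono_set hsub

/-- If a nonzero `g ∈ L²(𝕋³)` solves `u(0,q) g(q) = μ φ(q) ∫ φ(t) g(t) dt` a.e.
(`φ` real-analytic, `μ > 0`), then necessarily `φ(0) = 0`. -/
theorem stmt13 (φ : (Fin 3 → ℝ) → ℝ) (hφ : ∀ x, AnalyticAt ℝ φ x)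
    (μ : ℝ) (hμ : 0 < μ) (g : (Fin 3 → ℝ) → ℝ)
    (hg2 : MemLp g 2 (volume.restrict T3))
    (hgne : ¬ (∀ᵐ q ∂(volume.restrict T3), g q = 0))
    (heq : ∀ᵐ q ∂(volume.restrict T3),
      uu 0 q * g q = μ * φ q * ∫ t in T3, φ t * g t) :
    φ 0 = 0 :=
  stmt13_general φ hφ μ g hg2 hgne heq
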